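/- Let ⋆ be a semistar operation on an integral domain D. Then D is an H(⋆)-domain if and only if every ⋆-invertible fractional ideal of D is ⋆_f-invertible. -/

import Mathlib

/-!
(⇒) For a ⋆-invertible `I`, the integral ideal `I(D:I)` has ⋆-closure `D^⋆`, so the H(⋆)
property gives a finitely generated `J ⊆ I(D:I)` with `J^⋆ = D^⋆`; hence
`(I(D:I))^{⋆_f} ⊇ J^⋆ = D^⋆ ⊇ (I(D:I))^{⋆_f}`.

(⇐) An integral ideal `I` with `I^⋆ = D^⋆` is ⋆-invertible because `I ⊆ I(D:I) ⊆ D`, so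
`1 ∈ (I(D:I))^{⋆_f}`, i.e. `1 ∈ F^⋆` for some finitely generated `F ⊆ I(D:I)`. Finiteness of `F`
puts it inside `J(D:I)` for a finitely generated `J ⊆ I`, and `(D:I) ⊆ D^⋆` gives
`F^⋆ ⊆ (J D^⋆)^⋆ = J^⋆`. Thus `1 ∈ J^⋆`, i.e. `J^⋆ = D^⋆`.
-/

open Submodule

structure SemistarOperation (R K : Type*) [CommRing R] [Field K] [Algebra R K] where
  star : Submodule R K → Submodule R K
  star_smul : ∀ (x : K), x ≠ 0 → ∀ E : Submodule R K, E ≠ ⊥ →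
    star (E.map (LinearMap.mul R K x)) = (star E).map (LinearMap.mul R K x)
  star_mono : ∀ E F : Submodule R K, E ≠ ⊥ → F ≠ ⊥ → E ≤ F → star E ≤ star F
  le_star : ∀ E : Submodule R K, E ≠ ⊥ → E ≤ star E
  star_idem : ∀ E : Submodule R K, E ≠ ⊥ → star (star E) = star E

variable {R K : Type*} [CommRing R] [Field K] [Algebra R K]

def starF (s : SemistarOperation R K) (E : Submodule R K) : Submodule R K :=
  ⨆ (F : Submodule R K) (_ : F ≤ E ∧ F ≠ ⊥ ∧ F.FG), s.star F

def IsFiniteTypeOp (s : SemistarOperation R K) : Prop :=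
  ∀ E : Submodule R K, E ≠ ⊥ → s.star E = starF s E

def IsStableOp (s : SemistarOperation R K) : Prop :=
  ∀ E F : Submodule R K, E ≠ ⊥ → F ≠ ⊥ → E ⊓ F ≠ ⊥ → s.star (E ⊓ F) = s.star E ⊓ s.star F

def IsFracIdeal (I : Submodule R K) : Prop :=
  I ≠ ⊥ ∧ ∃ d : R, d ≠ 0 ∧ ∀ x ∈ I, algebraMap R K d * x ∈ (1 : Submodule R K)

def IsStarInv (s : SemistarOperation R K) (I : Submodule R K) : Prop :=
  s.star (I * ((1 : Submodule R K) / I)) = s.star 1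

def IsQuasiStarInv (s : SemistarOperation R K) (I : Submodule R K) : Prop :=
  s.star (I * (s.star 1 / I)) = s.star 1

def QuasiStarIdeal (f : Submodule R K → Submodule R K) (I : Ideal R) : Prop :=
  I ≠ ⊥ ∧ (f (Submodule.map (Algebra.linearMap R K) I)).comap (Algebra.linearMap R K) = I

def QuasiStarMax (f : Submodule R K → Submodule R K) (I : Ideal R) : Prop :=
  QuasiStarIdeal f I ∧ I ≠ ⊤ ∧ ∀ J : Ideal R, QuasiStarIdeal f J → J ≠ ⊤ → I ≤ J → I = J

def HStarDomain (s : SemistarOperation R K) : Prop :=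
  ∀ I : Ideal R, I ≠ ⊥ → s.star (Submodule.map (Algebra.linearMap R K) I) = s.star 1 →
    ∃ J : Ideal R, J ≠ ⊥ ∧ J.FG ∧ J ≤ I ∧ s.star (Submodule.map (Algebra.linearMap R K) J) = s.star 1

def locAt (Q : Ideal R) : Submodule R K :=
  span R {x : K | ∃ s : R, s ∉ Q ∧ x * algebraMap R K s = 1}

def starTilde (s : SemistarOperation R K) (E : Submodule R K) : Submodule R K :=
  ⨅ (Q : Ideal R) (_ : QuasiStarMax (starF s) Q), E * locAt Q

variable {D K : Type*} [CommRing D] [IsDomain D] [Field K] [Algebra D K] [IsFractionRing D K]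

namespace Submodule

variable {R A : Type*} [CommSemiring R] [Semiring A] [Algebra R A]

theorem exists_fg_le_mul_of_fg_le_mul {P Q F : Submodule R A} (hF : F.FG) (h : F ≤ P * Q) :
    ∃ P' ≤ P, P'.FG ∧ F ≤ P' * Q := by
  have hP : P ≤ ⨆ x : P, span R {(x : A)} := fun x hx =>
    mem_iSup_of_mem ⟨x, hx⟩ (mem_span_singleton_self x)
  have hFle : F ≤ ⨆ x : P, span R {(x : A)} * Q := by
    rw [← iSup_mul]
    exact h.trans (mul_le_mul_left hP Q)
  obtain ⟨t, ht⟩ := CompleteLattice.IsCompactElement.exists_finset_of_le_iSup (Submodule R A)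
    ((fg_iff_compact F).mp hF) _ hFle
  refine ⟨span R (Subtype.val '' (t : Set P)),
    span_le.mpr (Set.image_subset_iff.mpr fun x _ => x.2), fg_span (t.finite_toSet.image _),
    ht.trans ?_⟩
  refine iSup₂_le fun x hx => mul_le_mul_left ?_ _
  exact span_mono (Set.singleton_subset_iff.mpr ⟨x, hx, rfl⟩)

theorem one_ne_bot [Nontrivial A] : (1 : Submodule R A) ≠ ⊥ := fun h =>
  one_ne_zero ((mem_bot R).mp (h ▸ one_le.mp le_rfl : (1 : A) ∈ (⊥ : Submodule R A)))

theorem map_mul_ne_bot {K : Type*} [Field K] [Algebra R K] {x : K} (hx : x ≠ 0)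
    {E : Submodule R K} (hE : E ≠ ⊥) : E.map (LinearMap.mul R K x) ≠ ⊥ := fun h =>
  hE (map_injective_of_injective (mul_right_injective₀ hx) (h.trans (map_bot _).symm))

end Submodule

namespace SemistarOperation

variable {R K : Type*} [CommRing R] [Field K] [Algebra R K] (s : SemistarOperation R K)

theorem star_ne_bot {E : Submodule R K} (hE : E ≠ ⊥) : s.star E ≠ ⊥ :=
  fun h => hE (le_bot_iff.mp (h ▸ s.le_star E hE))

theorem one_le_star_one : (1 : Submodule R K) ≤ s.star 1 :=
  s.le_star 1 one_ne_bot

theorem mul_star_one_le {J : Submodule R K} (hJ : J ≠ ⊥) : J * s.star 1 ≤ s.star J := by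
  refine mul_le.mpr fun j hj d hd => ?_
  rcases eq_or_ne j 0 with rfl | hj0
  · simp
  have hspan : (1 : Submodule R K).map (LinearMap.mul R K j) = span R {j} := by
    rw [one_eq_span, map_span, Set.image_singleton, LinearMap.mul_apply', mul_one]
  have hjd : j * d ∈ s.star (span R {j}) := by
    rw [← hspan, s.star_smul j hj0 1 one_ne_bot]
    exact ⟨d, hd, rfl⟩
  exact s.star_mono _ _ (span_singleton_eq_bot.not.mpr hj0) hJ
    (span_le.mpr (Set.singleton_subset_iff.mpr hj)) hjd

theorem one_div_le_star_one {I : Submodule R K} (hI : I ≠ ⊥) (hIs : s.star I = s.star 1) :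
    1 / I ≤ s.star 1 := by
  intro x hx
  rcases eq_or_ne x 0 with rfl | hx0
  · exact (s.star 1).zero_mem
  have hxI : I.map (LinearMap.mul R K x) ≤ 1 := by
    rintro _ ⟨y, hy, rfl⟩
    exact mem_div_iff_forall_mul_mem.mp hx y hy
  have hle := s.star_mono _ _ (map_mul_ne_bot hx0 hI) one_ne_bot hxI
  rw [s.star_smul x hx0 I hI, hIs] at hle
  simpa using hle ⟨1, one_le.mp s.one_le_star_one, rfl⟩

theorem star_eq_star_one_of_one_mem {J : Submodule R K} (hJ1 : J ≤ 1) (hJ : J ≠ ⊥)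
    (h1 : (1 : K) ∈ s.star J) : s.star J = s.star 1 := by
  refine le_antisymm (s.star_mono _ _ hJ one_ne_bot hJ1) ?_
  calc s.star 1 ≤ s.star (s.star J) :=
        s.star_mono _ _ one_ne_bot (s.star_ne_bot hJ) (one_le.mpr h1)
    _ = s.star J := s.star_idem J hJ

theorem isStarInv_of_le_one {E : Submodule R K} (hE : E ≠ ⊥) (hE1 : E ≤ 1)
    (hEs : s.star E = s.star 1) : IsStarInv s E := by
  have hEE : E ≤ E * (1 / E) := le_self_mul_one_div hE1
  have hEE0 : E * (1 / E) ≠ ⊥ := fun h => hE (le_bot_iff.mp (h ▸ hEE))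
  refine le_antisymm (s.star_mono _ _ hEE0 one_ne_bot mul_one_div_le_one) ?_
  exact hEs ▸ s.star_mono _ _ hE hEE0 hEE

theorem starF_mono {E F : Submodule R K} (h : E ≤ F) : starF s E ≤ starF s F :=
  iSup₂_mono' fun G hG => ⟨G, ⟨hG.1.trans h, hG.2⟩, le_rfl⟩

theorem star_le_starF {E F : Submodule R K} (hFE : F ≤ E) (hF : F ≠ ⊥) (hFfg : F.FG) :
    s.star F ≤ starF s E :=
  le_iSup₂_of_le F ⟨hFE, hF, hFfg⟩ le_rfl

theorem starF_le_star {E : Submodule R K} (hE : E ≠ ⊥) : starF s E ≤ s.star E :=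
  iSup₂_le fun F hF => s.star_mono F E hF.2.1 hE hF.1

theorem starF_one : starF s 1 = s.star 1 :=
  le_antisymm (s.starF_le_star one_ne_bot) (s.star_le_starF le_rfl one_ne_bot
    (one_eq_span (R := R) (A := K) ▸ fg_span_singleton 1))

theorem exists_fg_of_mem_starF {E : Submodule R K} (hE : E ≠ ⊥) {x : K} (hx : x ∈ starF s E) :
    ∃ F ≤ E, F ≠ ⊥ ∧ F.FG ∧ x ∈ s.star F := by
  let ι := {F : Submodule R K // F ≤ E ∧ F ≠ ⊥ ∧ F.FG}
  have hne : Nonempty ι := by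
    obtain ⟨a, ha, ha0⟩ := exists_mem_ne_zero_of_ne_bot hE
    exact ⟨⟨span R {a}, span_le.mpr (Set.singleton_subset_iff.mpr ha),
      span_singleton_eq_bot.not.mpr ha0, fg_span_singleton a⟩⟩
  have hdir : Directed (· ≤ ·) fun F : ι => s.star F.1 := by
    rintro ⟨F₁, hF₁E, hF₁, hF₁fg⟩ ⟨F₂, hF₂E, hF₂, hF₂fg⟩
    have hsup : F₁ ⊔ F₂ ≠ ⊥ := fun h => hF₁ (le_bot_iff.mp (h ▸ le_sup_left))
    exact ⟨⟨F₁ ⊔ F₂, sup_le hF₁E hF₂E, hsup, hF₁fg.sup hF₂fg⟩,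
      s.star_mono _ _ hF₁ hsup le_sup_left, s.star_mono _ _ hF₂ hsup le_sup_right⟩
  have hx' : x ∈ ⨆ F : ι, s.star F.1 := by rwa [starF, iSup_subtype'] at hx
  obtain ⟨⟨F, hFE, hF, hFfg⟩, hxF⟩ := (mem_iSup_of_directed _ hdir).mp hx'
  exact ⟨F, hFE, hF, hFfg, hxF⟩

end SemistarOperation

section

open IsLocalization

variable {R K : Type*} [CommRing R] [Field K] [Algebra R K]

theorem coeSubmodule_le_one (I : Ideal R) : coeSubmodule K I ≤ 1 :=
  coeSubmodule_top (R := R) K ▸ coeSubmodule_mono K le_top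

theorem exists_coeSubmodule_eq_of_le_one {E : Submodule R K} (hE1 : E ≤ 1) :
    ∃ I : Ideal R, coeSubmodule K I = E :=
  ⟨E.comap (Algebra.linearMap R K), map_comap_eq_of_le (one_eq_range (R := R) (A := K) ▸ hE1)⟩

theorem isFracIdeal_of_le_one {E : Submodule R K} (hE : E ≠ ⊥) (hE1 : E ≤ 1) : IsFracIdeal E :=
  have := (algebraMap R K).domain_nontrivial
  ⟨hE, 1, one_ne_zero, fun x hx => by simpa using hE1 hx⟩

variable [IsFractionRing R K]

theorem coeSubmodule_ne_bot {I : Ideal R} (hI : I ≠ ⊥) : coeSubmodule K I ≠ ⊥ := by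
  rw [Ne, ← coeSubmodule_bot K]
  exact (IsFractionRing.coeSubmodule_injective R K).ne hI

theorem IsFracIdeal.mul_one_div_ne_bot {I : Submodule R K} (hI : IsFracIdeal I) :
    I * (1 / I) ≠ ⊥ := by
  obtain ⟨hI0, d, hd0, hd⟩ := hI
  obtain ⟨a, ha, ha0⟩ := exists_mem_ne_zero_of_ne_bot hI0
  have hdI : algebraMap R K d ∈ 1 / I := mem_div_iff_forall_mul_mem.mpr hd
  have had : a * algebraMap R K d ≠ 0 :=
    mul_ne_zero ha0 ((map_ne_zero_iff _ (IsFractionRing.injective R K)).mpr hd0)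
  exact fun h => had ((mem_bot R).mp (h ▸ mul_mem_mul ha hdI))

theorem hStarDomain_iff (s : SemistarOperation R K) :
    HStarDomain s ↔ ∀ E : Submodule R K, E ≤ 1 → E ≠ ⊥ → s.star E = s.star 1 →
      ∃ F ≤ E, F ≠ ⊥ ∧ F.FG ∧ s.star F = s.star 1 := by
  have hfg := coeSubmodule_fg K (IsFractionRing.injective R K)
  constructor
  · intro hH E hE1 hE hEs
    obtain ⟨I, rfl⟩ := exists_coeSubmodule_eq_of_le_one hE1
    obtain ⟨J, hJ, hJfg, hJI, hJs⟩ := hH I (by rintro rfl; exact hE (coeSubmodule_bot K)) hEs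
    exact ⟨coeSubmodule K J, coeSubmodule_mono K hJI, coeSubmodule_ne_bot hJ, (hfg J).mpr hJfg, hJs⟩
  · intro h I hI hIs
    obtain ⟨F, hFI, hF, hFfg, hFs⟩ :=
      h (coeSubmodule K I) (coeSubmodule_le_one I) (coeSubmodule_ne_bot hI) hIs
    obtain ⟨J, rfl⟩ := exists_coeSubmodule_eq_of_le_one (hFI.trans (coeSubmodule_le_one I))
    exact ⟨J, by rintro rfl; exact hF (coeSubmodule_bot K), (hfg J).mp hFfg,
      IsFractionRing.coeSubmodule_le_coeSubmodule.mp hFI, hFs⟩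

theorem SemistarOperation.starF_mul_one_div_eq_of_hStarDomain {s : SemistarOperation R K}
    (hH : HStarDomain s) {I : Submodule R K} (hI : IsFracIdeal I) (hinv : IsStarInv s I) :
    starF s (I * (1 / I)) = starF s 1 := by
  obtain ⟨F, hFE, hF, hFfg, hFs⟩ :=
    (hStarDomain_iff s).mp hH _ mul_one_div_le_one hI.mul_one_div_ne_bot hinv
  refine le_antisymm (s.starF_mono mul_one_div_le_one) ?_
  rw [s.starF_one, ← hFs]
  exact s.star_le_starF hFE hF hFfg

theorem SemistarOperation.hStarDomain_of_forall_starF_mul_one_div_eq (s : SemistarOperation R K)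
    (h : ∀ I : Submodule R K, IsFracIdeal I → IsStarInv s I → starF s (I * (1 / I)) = starF s 1) :
    HStarDomain s := by
  refine (hStarDomain_iff s).mpr fun E hE1 hE hEs => ?_
  have hfrac := isFracIdeal_of_le_one hE hE1
  have h1 : (1 : K) ∈ starF s (E * (1 / E)) := by
    rw [h E hfrac (s.isStarInv_of_le_one hE hE1 hEs), s.starF_one]
    exact one_le.mp s.one_le_star_one
  obtain ⟨F, hFE, hF, hFfg, h1F⟩ := s.exists_fg_of_mem_starF hfrac.mul_one_div_ne_bot h1
  obtain ⟨P, hPE, hPfg, hFP⟩ := exists_fg_le_mul_of_fg_le_mul hFfg hFE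
  have hP : P ≠ ⊥ := by
    rintro rfl
    rw [bot_mul, le_bot_iff] at hFP
    exact hF hFP
  have hPs : P * (1 / E) ≤ s.star P :=
    (mul_le_mul_right (s.one_div_le_star_one hE hEs) P).trans (s.mul_star_one_le hP)
  refine ⟨P, hPE, hP, hPfg, s.star_eq_star_one_of_one_mem (hPE.trans hE1) hP ?_⟩
  rw [← s.star_idem P hP]
  exact s.star_mono F _ hF (s.star_ne_bot hP) (hFP.trans hPs) h1F

end

theorem stmt10 (s : SemistarOperation D K) :
    HStarDomain s ↔
    ∀ I : Submodule D K, IsFracIdeal I → IsStarInv s I →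
      starF s (I * ((1 : Submodule D K) / I)) = starF s 1 :=
  ⟨fun hH _ hI hinv => s.starF_mul_one_div_eq_of_hStarDomain hH hI hinv,
    s.hStarDomain_of_forall_starF_mul_one_div_eq⟩
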